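/- Let p ≥ 1 and β_1, …, β_p ∈ ℝ. For all 1 ≤ j < k ≤ p: Σ_{a ∈ {±1}^{2p+1}} a_{−j} · a_{−k} · f(a) = exp(2i Σ_{t=j}^{k−1} β_t), where the sum is over bitstrings a = (a_l)_{l ∈ {−p,…,−1,0,1,…,p}}. -/

import Mathlib

/-!
Every factor of `f(a)` is a matrix element `⟨u|e^{iθX}|v⟩` that depends only on the product `u v`,
and these factors are the bonds of the open chain `a_1, …, a_p, a_0, a_{-p}, …, a_{-1}`. Changing
variables from the spins to the bond products decouples the chain sum into a product of one-bond
sums `∑_x ⟨1|e^{iθX}|x⟩ = e^{iθ}`, while `a_{-j} a_{-k}` is the product of the bonds between `-k`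
and `-j`, which turns each of their factors into `∑_x x ⟨1|e^{iθX}|x⟩ = e^{-iθ}`. The phases
`e^{±iβ_t}` of the two halves of the chain cancel, leaving `e^{2iβ_t}` for `j ≤ t < k`.
-/

open scoped BigOperators

/-- The single-qubit `X`-rotation matrix element
`⟨a|e^{iθX}|b⟩ = cos θ` if `a = b` and `i sin θ` otherwise, for `a, b ∈ {±1}`. -/
noncomputable def braXket (θ : ℝ) (a b : ℤ) : ℂ :=
  if a = b then (Real.cos θ : ℂ) else Complex.I * (Real.sin θ : ℂ)

/-- The value in `{±1} ⊆ ℤ` of a `(2p+1)`-bit bitstring `a` at position `l ∈ {−p,…,p}`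
(positions are shifted by `p` to land in `Fin (2p+1)`). -/
def signAt (p : ℕ) (a : Fin (2 * p + 1) → ℤˣ) (l : ℤ) : ℤ :=
  if h : (l + p).toNat < 2 * p + 1 then (a ⟨(l + p).toNat, h⟩ : ℤ) else 1

/-- The two-sided `f` tensor:
`f(a) = (1/2)·⟨a_p|e^{iβ_p X}|a_0⟩·⟨a_0|e^{−iβ_p X}|a_{−p}⟩·
∏_{t=1}^{p−1} ⟨a_t|e^{iβ_t X}|a_{t+1}⟩·⟨a_{−t−1}|e^{−iβ_t X}|a_{−t}⟩`,
for a bitstring `z : ℤ → ℤ` (with relevant positions `−p,…,p`). -/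
noncomputable def fTwo (p : ℕ) (β : ℕ → ℝ) (z : ℤ → ℤ) : ℂ :=
  (1 / 2 : ℂ) * braXket (β p) (z p) (z 0) * braXket (-β p) (z 0) (z (-(p : ℤ))) *
    ∏ t ∈ Finset.Icc 1 (p - 1),
      (braXket (β t) (z t) (z ((t : ℤ) + 1)) *
        braXket (-β t) (z (-(t : ℤ) - 1)) (z (-(t : ℤ))))

open Finset Complex

lemma braXket_units (θ : ℝ) (u v : ℤˣ) : braXket θ u v = braXket θ 1 ↑(u * v) := by
  rcases Int.units_eq_one_or u with rfl | rfl <;>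
    rcases Int.units_eq_one_or v with rfl | rfl <;> simp [braXket]

lemma sum_braXket_one (θ : ℝ) : ∑ x : ℤˣ, braXket θ 1 x = exp (θ * I) := by
  rw [UnitsInt.univ, sum_pair (by decide), exp_mul_I]
  simp [braXket, mul_comm]

lemma sum_mul_braXket_one (θ : ℝ) :
    ∑ x : ℤˣ, ((x : ℤ) : ℂ) * braXket θ 1 x = exp (-θ * I) := by
  rw [UnitsInt.univ, sum_pair (by decide), ← ofReal_neg, exp_mul_I]
  simp [braXket]
  ring

section ExtendByOne

variable {M : Type*} [One M] {n : ℕ}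

def extendByOne (c : Fin n → M) (m : ℕ) : M :=
  if h : m < n then c ⟨m, h⟩ else 1

@[simp]
lemma extendByOne_cons_zero (x : M) (c : Fin n → M) :
    extendByOne (Fin.cons x c : Fin (n + 1) → M) 0 = x := by
  simp [extendByOne]

@[simp]
lemma extendByOne_cons_succ (x : M) (c : Fin n → M) (m : ℕ) :
    extendByOne (Fin.cons x c : Fin (n + 1) → M) (m + 1) = extendByOne c m := by
  by_cases h : m < n
  · simpa [extendByOne, h] using Fin.cons_succ (α := fun _ => M) x c ⟨m, h⟩
  · simp [extendByOne, h]

end ExtendByOne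

theorem sum_prod_chain {G R : Type*} [Group G] [Fintype G] [CommSemiring R] (n : ℕ)
    (g : ℕ → G → R) :
    ∑ c : Fin (n + 1) → G, ∏ i ∈ range n, g i (extendByOne c i * extendByOne c (i + 1)) =
      Fintype.card G * ∏ i ∈ range n, ∑ x, g i x := by
  induction n generalizing g with
  | zero => simp
  | succ n ih =>
    have peel (x : G) (d : Fin (n + 1) → G) :
        ∏ i ∈ range (n + 1), g i (extendByOne (Fin.cons x d : Fin (n + 2) → G) i *
          extendByOne (Fin.cons x d : Fin (n + 2) → G) (i + 1)) =
        g 0 (x * extendByOne d 0) *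
          ∏ i ∈ range n, g (i + 1) (extendByOne d i * extendByOne d (i + 1)) := by
      rw [prod_range_succ', mul_comm]
      simp only [extendByOne_cons_zero, extendByOne_cons_succ]
    have shift (a : G) : ∑ x, g 0 (x * a) = ∑ x, g 0 x := Equiv.sum_comp (Equiv.mulRight a) (g 0)
    rw [← (Fin.consEquiv fun _ => G).sum_comp, Fintype.sum_prod_type, sum_comm]
    simp only [Fin.consEquiv, Equiv.coe_fn_mk, peel, ← sum_mul, shift, ← mul_sum, ih,
      prod_range_succ' _ n]
    ring

lemma prod_Ico_units_mul_succ (E : ℕ → ℤˣ) {m m' : ℕ} (h : m ≤ m') :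
    ∏ i ∈ Ico m m', E i * E (i + 1) = E m * E m' := by
  have flip (u v : ℤˣ) : u * v = v / u := by rw [div_eq_mul_inv, Int.units_inv_eq_self, mul_comm]
  simp only [flip _ (E _)]
  rw [prod_Ico_div E h]

theorem sum_chain_two_point (n : ℕ) (θ : ℕ → ℝ) {m m' : ℕ} (hm : m ≤ m') (hm' : m' ≤ n) :
    ∑ c : Fin (n + 1) → ℤˣ,
        (((extendByOne c m : ℤˣ) : ℤ) : ℂ) * (((extendByOne c m' : ℤˣ) : ℤ) : ℂ) *
          ∏ i ∈ range n, braXket (θ i) (extendByOne c i : ℤˣ) (extendByOne c (i + 1) : ℤˣ) =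
      2 * exp ((∑ i ∈ range n, (θ i : ℂ)) * I) * exp (-2 * (∑ i ∈ Ico m m', (θ i : ℂ)) * I) := by
  have window : Ico m m' ⊆ range n := fun i hi => by
    simp only [mem_Ico, mem_range] at hi ⊢
    omega
  set g : ℕ → ℤˣ → ℂ := fun i x => (if i ∈ Ico m m' then ((x : ℤ) : ℂ) else 1) * braXket (θ i) 1 x
  have bonds (c : Fin (n + 1) → ℤˣ) :
      (((extendByOne c m : ℤˣ) : ℤ) : ℂ) * (((extendByOne c m' : ℤˣ) : ℤ) : ℂ) *
        ∏ i ∈ range n, braXket (θ i) (extendByOne c i : ℤˣ) (extendByOne c (i + 1) : ℤˣ) =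
      ∏ i ∈ range n, g i (extendByOne c i * extendByOne c (i + 1)) := by
    simp only [g, prod_mul_distrib, prod_ite_mem, inter_eq_right.mpr window, braXket_units]
    congr 1
    rw [← Int.cast_mul, ← Units.val_mul, ← prod_Ico_units_mul_succ (extendByOne c) hm]
    push_cast
    rfl
  have bond_sum (i : ℕ) :
      ∑ x, g i x = exp (θ i * I) * if i ∈ Ico m m' then exp (-2 * θ i * I) else 1 := by
    by_cases hi : i ∈ Ico m m'
    · simp only [g, hi, if_true, sum_mul_braXket_one, ← Complex.exp_add]
      ring_nf
    · simp only [g, hi, if_false, one_mul, sum_braXket_one, mul_one]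
  simp only [bonds, sum_prod_chain, bond_sum, prod_mul_distrib, prod_ite_mem,
    inter_eq_right.mpr window, ← Complex.exp_sum, ← sum_mul, ← mul_sum]
  rw [Fintype.card_units_int]
  push_cast
  ring

/- The bonds of `f` form the open chain `a_1, …, a_p, a_0, a_{-p}, …, a_{-1}`: `chainLabel p i` is
the site at position `i` of this chain and `chainAngle p β i` the angle of the bond from position
`i` to `i + 1`. -/
def chainLabel (p i : ℕ) : ℤ :=
  if i < p then i + 1 else if i = p then 0 else i - (2 * p + 1)

noncomputable def chainAngle (p : ℕ) (β : ℕ → ℝ) (i : ℕ) : ℝ :=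
  if i < p then β (i + 1) else -β (2 * p - i)

section ChainLabel

variable {p i : ℕ}

lemma chainLabel_of_lt (h : i < p) : chainLabel p i = i + 1 := if_pos h

lemma chainLabel_self : chainLabel p p = 0 := by simp [chainLabel]

lemma chainLabel_of_gt (h : p < i) : chainLabel p i = i - (2 * p + 1) := by
  rw [chainLabel, if_neg (by omega), if_neg (by omega)]

lemma chainAngle_of_lt (β : ℕ → ℝ) (h : i < p) : chainAngle p β i = β (i + 1) := if_pos h

lemma chainAngle_of_le (β : ℕ → ℝ) (h : p ≤ i) : chainAngle p β i = -β (2 * p - i) :=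
  if_neg (by omega)

end ChainLabel

-- Sends the index `l + p` of site `l` to the position of `l` on the chain.
def chainPos (p : ℕ) (s : Fin (2 * p + 1)) : Fin (2 * p + 1) :=
  ⟨if s < p then s + p + 1 else if s = p then p else s - p - 1, by split_ifs <;> omega⟩

lemma chainPos_involutive (p : ℕ) : Function.Involutive (chainPos p) := fun s => by
  ext
  simp only [chainPos]
  split_ifs <;> omega

lemma signAt_comp_chainPos (p : ℕ) (c : Fin (2 * p + 1) → ℤˣ) {i : ℕ} (hi : i ≤ 2 * p) :
    signAt p (c ∘ chainPos p) (chainLabel p i) = extendByOne c i := by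
  have hl : (chainLabel p i + p).toNat < 2 * p + 1 := by
    simp only [chainLabel]
    split_ifs <;> omega
  rw [signAt, dif_pos hl, extendByOne, dif_pos (by omega), Function.comp_apply]
  refine congrArg (fun s => (c s : ℤ)) (Fin.ext ?_)
  simp only [chainPos, chainLabel]
  split_ifs <;> omega

lemma fTwo_eq_prod_chain {p : ℕ} (hp : 1 ≤ p) (β : ℕ → ℝ) (z : ℤ → ℤ) :
    fTwo p β z = 1 / 2 * ∏ i ∈ range (2 * p),
      braXket (chainAngle p β i) (z (chainLabel p i)) (z (chainLabel p (i + 1))) := by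
  obtain ⟨q, rfl⟩ : ∃ q, p = q + 1 := ⟨p - 1, by omega⟩
  rw [fTwo, add_tsub_cancel_right, ← Ico_add_one_right_eq_Icc, prod_Ico_eq_prod_range,
    add_tsub_cancel_right, prod_mul_distrib, two_mul, prod_range_add, prod_range_succ,
    prod_range_succ']
  have first_half : ∀ i ∈ range q,
      braXket (chainAngle (q + 1) β i) (z (chainLabel (q + 1) i)) (z (chainLabel (q + 1) (i + 1)))
        = braXket (β (1 + i)) (z ↑(1 + i)) (z (↑(1 + i) + 1)) := fun i hi => by
    rw [mem_range] at hi
    rw [chainAngle_of_lt β (by omega), chainLabel_of_lt (by omega), chainLabel_of_lt (by omega)]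
    push_cast
    ring_nf
  have second_half :
      ∏ k ∈ range q, braXket (chainAngle (q + 1) β (q + 1 + (k + 1)))
        (z (chainLabel (q + 1) (q + 1 + (k + 1)))) (z (chainLabel (q + 1) (q + 1 + (k + 1) + 1)))
        = ∏ j ∈ range q, braXket (-β (1 + j)) (z (-↑(1 + j) - 1)) (z (-↑(1 + j))) := by
    rw [← prod_range_reflect]
    refine prod_congr rfl fun j hj => ?_
    rw [mem_range] at hj
    rw [chainAngle_of_le β (by omega), chainLabel_of_gt (by omega), chainLabel_of_gt (by omega),
      show 2 * (q + 1) - (q + 1 + (q - 1 - j + 1)) = 1 + j by omega,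
      show q - 1 - j + 1 = q - j by omega]
    push_cast [Nat.cast_sub hj.le]
    ring_nf
  rw [prod_congr rfl first_half, second_half, chainAngle_of_lt β (by omega),
    chainAngle_of_le β (by omega), chainLabel_of_lt (by omega), chainLabel_self,
    chainLabel_of_gt (by omega), show 2 * (q + 1) - (q + 1 + 0) = q + 1 by omega]
  push_cast
  ring_nf

lemma fTwo_comp_chainPos {p : ℕ} (hp : 1 ≤ p) (β : ℕ → ℝ) (c : Fin (2 * p + 1) → ℤˣ) :
    fTwo p β (signAt p (c ∘ chainPos p)) = 1 / 2 * ∏ i ∈ range (2 * p),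
      braXket (chainAngle p β i) (extendByOne c i : ℤˣ) (extendByOne c (i + 1) : ℤˣ) := by
  rw [fTwo_eq_prod_chain hp]
  congr 1
  refine prod_congr rfl fun i hi => ?_
  rw [mem_range] at hi
  rw [signAt_comp_chainPos p c (by omega), signAt_comp_chainPos p c (by omega)]

lemma sum_chainAngle (p : ℕ) (β : ℕ → ℝ) : ∑ i ∈ range (2 * p), chainAngle p β i = 0 := by
  rw [two_mul, sum_range_add, ← sum_range_reflect (fun i => chainAngle p β (p + i)),
    ← sum_add_distrib]
  refine sum_eq_zero fun i hi => ?_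
  rw [mem_range] at hi
  rw [chainAngle_of_lt β hi, chainAngle_of_le β (by omega),
    show 2 * p - (p + (p - 1 - i)) = i + 1 by omega, add_neg_cancel]

lemma sum_Ico_chainAngle {p j k : ℕ} (β : ℕ → ℝ) (hj : 1 ≤ j) (hjk : j < k) (hk : k ≤ p) :
    ∑ i ∈ Ico (2 * p + 1 - k) (2 * p + 1 - j), chainAngle p β i = -∑ t ∈ Icc j (k - 1), β t := by
  rw [Icc_sub_one_right_eq_Ico_of_not_isMin (by simp only [isMin_iff_eq_bot, Nat.bot_eq_zero]; omega), ← sum_Ico_reflect _ _ (by omega),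
    ← sum_neg_distrib]
  refine sum_congr rfl fun t ht => ?_
  rw [mem_Ico] at ht
  rw [chainAngle_of_le β (by omega), show 2 * p - (2 * p - t) = t by omega]

theorem stmt12 (p : ℕ) (β : ℕ → ℝ) (j k : ℕ)
    (hj : 1 ≤ j) (hjk : j < k) (hk : k ≤ p) :
    ∑ a : Fin (2 * p + 1) → ℤˣ,
        ((signAt p a (-(j : ℤ)) : ℂ) * (signAt p a (-(k : ℤ)) : ℂ) *
          fTwo p β (signAt p a))
      = Complex.exp (2 * Complex.I * ∑ t ∈ Finset.Icc j (k - 1), (β t : ℂ)) := by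
  have label (t : ℕ) (ht : 1 ≤ t) (htp : t ≤ p) : -(t : ℤ) = chainLabel p (2 * p + 1 - t) := by
    rw [chainLabel_of_gt (by omega)]
    omega
  have relabel : Function.Bijective fun c : Fin (2 * p + 1) → ℤˣ => c ∘ chainPos p :=
    Function.Involutive.bijective fun c => by
      rw [Function.comp_assoc, (chainPos_involutive p).comp_self, Function.comp_id]
  rw [← Fintype.sum_bijective _ relabel _ _ fun _ => rfl]
  have summand (c : Fin (2 * p + 1) → ℤˣ) :
      (signAt p (c ∘ chainPos p) (-(j : ℤ)) : ℂ) * (signAt p (c ∘ chainPos p) (-(k : ℤ)) : ℂ) *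
          fTwo p β (signAt p (c ∘ chainPos p)) =
        1 / 2 * ((((extendByOne c (2 * p + 1 - k) : ℤˣ) : ℤ) : ℂ) *
          (((extendByOne c (2 * p + 1 - j) : ℤˣ) : ℤ) : ℂ) *
          ∏ i ∈ range (2 * p), braXket (chainAngle p β i) (extendByOne c i : ℤˣ)
            (extendByOne c (i + 1) : ℤˣ)) := by
    rw [fTwo_comp_chainPos (by omega), label j hj (by omega), label k (by omega) hk,
      signAt_comp_chainPos p c (by omega), signAt_comp_chainPos p c (by omega)]
    ring
  rw [sum_congr rfl fun c _ => summand c, ← mul_sum, sum_chain_two_point _ _ (by omega) (by omega),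
    ← ofReal_sum, ← ofReal_sum, sum_chainAngle, sum_Ico_chainAngle β hj hjk hk]
  push_cast
  rw [zero_mul, exp_zero]
  ring_nf
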